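/- arXiv:1903.10049 — 9 statements merged into one kernel-verified Lean document; each statement's English description precedes it below -/
import Mathlib

section
/- Let R be a ring (associative with 1 ≠ 0) of stable range 1, i.e. for all a, b ∈ R with aR + bR = R there exists t ∈ R with a + bt a unit. If a ∈ R and u ∈ R is a unit such that Ra = Rau, then there exists a unit v ∈ R with au = va. -/
/-- `R` has stable range 1: whenever `aR + bR = R` there is `t` with `a + b*t` a unit. -/
def StableRange1 (R : Type*) [Ring R] : Prop :=
  ∀ a b : R, (∃ x y : R, a * x + b * y = 1) → ∃ t : R, IsUnit (a + b * t)

/-- `R` has unit stable range 1. -/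
def UnitStableRange1 (R : Type*) [Ring R] : Prop :=
  ∀ a b : R, (∃ x y : R, a * x + b * y = 1) → ∃ u : R, IsUnit u ∧ IsUnit (a + b * u)

/-- Left Kazimirsky condition: `Rau ⊆ Ra` for every `a` and unit `u`. -/
def LeftKazimirsky (R : Type*) [Ring R] : Prop :=
  ∀ a u : R, IsUnit u → ∀ r : R, ∃ s : R, r * (a * u) = s * a

/-- Right Kazimirsky condition: `uaR ⊆ aR` for every `a` and unit `u`. -/
def RightKazimirsky (R : Type*) [Ring R] : Prop :=
  ∀ a u : R, IsUnit u → ∀ r : R, ∃ s : R, u * (a * r) = a * s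

/-- Transfer lemma (valid in any ring): if `s + (1-sr)t` is a unit then so is
`s + t(1-rs)`, with explicit inverse `r + (1-rt)·v⁻¹·(1-sr)`. -/
theorem unit_transfer {R : Type*} [Ring R] (s r t : R)
    (hv : IsUnit (s + (1 - s * r) * t)) : IsUnit (s + t * (1 - r * s)) := by
  obtain ⟨v, hv⟩ := hv
  have h1 : (s + (1 - s * r) * t) * ↑v⁻¹ = 1 := by rw [← hv]; exact v.mul_inv
  have h2 : (↑v⁻¹ : R) * (s + (1 - s * r) * t) = 1 := by rw [← hv]; exact v.inv_mul
  refine isUnit_iff_exists.mpr ⟨r + (1 - r * t) * ↑v⁻¹ * (1 - s * r), ?_, ?_⟩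
  · have key1 : (s + t * (1 - r * s)) * (1 - r * t) = (1 - t * r) * (s + (1 - s * r) * t) := by
      noncomm_ring
    have key2 : (s + t * (1 - r * s)) * r + (1 - t * r) * (1 - s * r) = 1 := by
      noncomm_ring
    calc (s + t * (1 - r * s)) * (r + (1 - r * t) * ↑v⁻¹ * (1 - s * r))
        = (s + t * (1 - r * s)) * r
            + ((s + t * (1 - r * s)) * (1 - r * t)) * (↑v⁻¹ * (1 - s * r)) := by
          noncomm_ring
      _ = (s + t * (1 - r * s)) * r
            + (1 - t * r) * (((s + (1 - s * r) * t) * ↑v⁻¹) * (1 - s * r)) := by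
          rw [key1]; noncomm_ring
      _ = (s + t * (1 - r * s)) * r + (1 - t * r) * (1 - s * r) := by rw [h1]; rw [one_mul]
      _ = 1 := key2
  · have key3 : (1 - s * r) * (s + t * (1 - r * s)) = (s + (1 - s * r) * t) * (1 - r * s) := by
      noncomm_ring
    have key4 : r * (s + t * (1 - r * s)) + (1 - r * t) * (1 - r * s) = 1 := by
      noncomm_ring
    calc (r + (1 - r * t) * ↑v⁻¹ * (1 - s * r)) * (s + t * (1 - r * s))
        = r * (s + t * (1 - r * s))
            + (1 - r * t) * (↑v⁻¹ * ((1 - s * r) * (s + t * (1 - r * s)))) := by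
          noncomm_ring
      _ = r * (s + t * (1 - r * s))
            + (1 - r * t) * ((↑v⁻¹ * (s + (1 - s * r) * t)) * (1 - r * s)) := by
          rw [key3]; noncomm_ring
      _ = r * (s + t * (1 - r * s)) + (1 - r * t) * (1 - r * s) := by rw [h2]; rw [one_mul]
      _ = 1 := key4

theorem stmt0 {R : Type*} [Ring R] [Nontrivial R] (hR : StableRange1 R)
    (a u : R) (hu : IsUnit u)
    (h : ∀ z : R, (∃ r : R, z = r * a) ↔ (∃ r : R, z = r * (a * u))) :
    ∃ v : R, IsUnit v ∧ a * u = v * a := by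
  -- extract `a = r * (a*u)` and `a*u = s * a`
  obtain ⟨r, hr⟩ := (h a).mp ⟨1, (one_mul a).symm⟩
  obtain ⟨s, hs⟩ := (h (a * u)).mpr ⟨1, (one_mul (a * u)).symm⟩
  -- hence `r * s * a = a`
  have hrsa : r * s * a = a := by
    rw [mul_assoc, ← hs]; exact hr.symm
  -- stable range 1 applied to `s * r + (1 - s*r) * 1 = 1`
  obtain ⟨t, ht⟩ := hR s (1 - s * r) ⟨r, 1, by noncomm_ring⟩
  -- transfer to `w := s + t * (1 - r*s)`, a unit
  have hw : IsUnit (s + t * (1 - r * s)) := unit_transfer s r t ht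
  refine ⟨s + t * (1 - r * s), hw, ?_⟩
  -- `w * a = s*a + t*(a - r*s*a) = s*a = a*u`
  have : (s + t * (1 - r * s)) * a = s * a + t * (a - r * s * a) := by noncomm_ring
  rw [this, hrsa, sub_self, mul_zero, add_zero, hs]
end

section
/- Let R be a ring of stable range 1 satisfying the left Kazimirsky condition (for every a ∈ R and every unit u ∈ R, Rau ⊆ Ra). Then for all a, b ∈ R, if aR + bR = R then Ra + Rb = R. -/
/-- Vaserstein's symmetry argument, in the instance we need: if `R` has (right)
stable range one and `x*A + y*B = 1`, then the column `(A; B)` can be reduced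
from the left: there is `z` with `A + z*B` a unit. -/
theorem sr1_left_reduce {R : Type*} [Ring R] (hR : StableRange1 R)
    (x y A B : R) (h : x * A + y * B = 1) : ∃ z : R, IsUnit (A + z * B) := by
  -- First stable-range application: the pair (y, x) is right unimodular.
  obtain ⟨d, hd⟩ := hR y x ⟨B, A, by rw [add_comm]; exact h⟩
  obtain ⟨w, hw⟩ := hd
  set ω : R := ((w⁻¹ : Rˣ) : R) with hω
  have hw1 : (y + x * d) * ω = 1 := by rw [← hw, hω]; exact w.mul_inv
  have hw2 : ω * (y + x * d) = 1 := by rw [← hw, hω]; exact w.inv_mul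
  set g : R := A - d * B with hg
  set p : R := 1 - d * (ω * x) with hp
  set q : R := -(ω * x) with hq
  have hxA : x * A = 1 - y * B := eq_sub_of_add_eq h
  have K1 : x * g = 1 - (y + x * d) * B := by
    rw [hg]
    calc x * (A - d * B) = x * A - x * d * B := by noncomm_ring
    _ = (1 - y * B) - x * d * B := by rw [hxA]
    _ = 1 - (y + x * d) * B := by noncomm_ring
  have K2 : ω * (x * g) = ω - B := by
    rw [K1]
    calc ω * (1 - (y + x * d) * B) = ω - (ω * (y + x * d)) * B := by noncomm_ring
    _ = ω - B := by rw [hw2]; noncomm_ring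
  have K3 : p * g = A - d * ω := by
    calc p * g = g - d * (ω * (x * g)) := by rw [hp]; noncomm_ring
    _ = g - d * (ω - B) := by rw [K2]
    _ = A - d * ω := by rw [hg]; noncomm_ring
  have K4 : x * p = y * (ω * x) := by
    calc x * p = x - ((y + x * d) * ω) * x + y * (ω * x) := by rw [hp]; noncomm_ring
    _ = y * (ω * x) := by rw [hw1]; noncomm_ring
  -- entries of N * M₀ = 1
  have e2 : x * p + y * q = 0 := by rw [K4, hq]; noncomm_ring
  have e3 : (1 - g * x) * A + (-(g * y) - d) * B = 0 := by
    calc (1 - g * x) * A + (-(g * y) - d) * B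
        = A - g * (x * A + y * B) - d * B := by noncomm_ring
    _ = A - g * 1 - d * B := by rw [h]
    _ = 0 := by rw [hg]; noncomm_ring
  have e4 : (1 - g * x) * p + (-(g * y) - d) * q = 1 := by
    calc (1 - g * x) * p + (-(g * y) - d) * q
        = p + d * (ω * x) - g * (x * p) + g * (y * (ω * x)) := by rw [hq]; noncomm_ring
    _ = p + d * (ω * x) := by rw [K4]; noncomm_ring
    _ = 1 := by rw [hp]; noncomm_ring
  -- entries of M₀ * N = 1
  have f1 : A * x + p * (1 - g * x) = 1 := by
    calc A * x + p * (1 - g * x) = A * x + p - (p * g) * x := by noncomm_ring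
    _ = A * x + p - (A - d * ω) * x := by rw [K3]
    _ = p + d * (ω * x) := by noncomm_ring
    _ = 1 := by rw [hp]; noncomm_ring
  have f2 : A * y + p * (-(g * y) - d) = 0 := by
    calc A * y + p * (-(g * y) - d) = A * y - (p * g) * y - p * d := by noncomm_ring
    _ = A * y - (A - d * ω) * y - p * d := by rw [K3]
    _ = d * (ω * (y + x * d)) - d := by rw [hp]; noncomm_ring
    _ = 0 := by rw [hw2]; noncomm_ring
  have f3 : B * x + q * (1 - g * x) = 0 := by
    calc B * x + q * (1 - g * x)
        = B * x - (ω * x) + (ω * (x * g)) * x := by rw [hq]; noncomm_ring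
    _ = B * x - (ω * x) + (ω - B) * x := by rw [K2]
    _ = 0 := by noncomm_ring
  have f4 : B * y + q * (-(g * y) - d) = 1 := by
    calc B * y + q * (-(g * y) - d)
        = B * y + (ω * (x * g)) * y + ω * (x * d) := by rw [hq]; noncomm_ring
    _ = B * y + (ω - B) * y + ω * (x * d) := by rw [K2]
    _ = ω * (y + x * d) := by noncomm_ring
    _ = 1 := hw2
  -- Second stable-range application: the pair (q, B) is right unimodular.
  obtain ⟨c, hc⟩ := hR q B ⟨-(g * y) - d, y, by rw [add_comm]; exact f4⟩
  obtain ⟨v, hv⟩ := hc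
  set τ : R := ((v⁻¹ : Rˣ) : R) with hτ
  have hv1 : (q + B * c) * τ = 1 := by rw [← hv, hτ]; exact v.mul_inv
  have hv2 : τ * (q + B * c) = 1 := by rw [← hv, hτ]; exact v.inv_mul
  set k : R := A * c + p with hk
  -- 2×2 matrix bookkeeping
  have hM0N : !![A, p; B, q] * !![x, y; 1 - g * x, -(g * y) - d] = 1 := by
    rw [Matrix.mul_fin_two, f1, f2, f3, f4]; exact Matrix.one_fin_two.symm
  have hNM0 : !![x, y; 1 - g * x, -(g * y) - d] * !![A, p; B, q] = 1 := by
    rw [Matrix.mul_fin_two, h, e2, e3, e4]; exact Matrix.one_fin_two.symm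
  have hTT' : !![(1 : R), c; 0, 1] * !![(1 : R), -c; 0, 1] = 1 := by
    rw [Matrix.mul_fin_two]
    have a11 : (1 : R) * 1 + c * 0 = 1 := by noncomm_ring
    have a12 : (1 : R) * (-c) + c * 1 = 0 := by noncomm_ring
    have a21 : (0 : R) * 1 + 1 * 0 = 0 := by noncomm_ring
    have a22 : (0 : R) * (-c) + 1 * 1 = 1 := by noncomm_ring
    rw [a11, a12, a21, a22]; exact Matrix.one_fin_two.symm
  have hT'T : !![(1 : R), -c; 0, 1] * !![(1 : R), c; 0, 1] = 1 := by
    rw [Matrix.mul_fin_two]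
    have a11 : (1 : R) * 1 + (-c) * 0 = 1 := by noncomm_ring
    have a12 : (1 : R) * c + (-c) * 1 = 0 := by noncomm_ring
    have a21 : (0 : R) * 1 + 1 * 0 = 0 := by noncomm_ring
    have a22 : (0 : R) * c + 1 * 1 = 1 := by noncomm_ring
    rw [a11, a12, a21, a22]; exact Matrix.one_fin_two.symm
  have hLL' : !![(1 : R), -(k * τ); 0, 1] * !![(1 : R), k * τ; 0, 1] = 1 := by
    rw [Matrix.mul_fin_two]
    have a11 : (1 : R) * 1 + -(k * τ) * 0 = 1 := by noncomm_ring
    have a12 : (1 : R) * (k * τ) + -(k * τ) * 1 = 0 := by noncomm_ring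
    have a21 : (0 : R) * 1 + 1 * 0 = 0 := by noncomm_ring
    have a22 : (0 : R) * (k * τ) + 1 * 1 = 1 := by noncomm_ring
    rw [a11, a12, a21, a22]; exact Matrix.one_fin_two.symm
  have hL'L : !![(1 : R), k * τ; 0, 1] * !![(1 : R), -(k * τ); 0, 1] = 1 := by
    rw [Matrix.mul_fin_two]
    have a11 : (1 : R) * 1 + k * τ * 0 = 1 := by noncomm_ring
    have a12 : (1 : R) * -(k * τ) + k * τ * 1 = 0 := by noncomm_ring
    have a21 : (0 : R) * 1 + 1 * 0 = 0 := by noncomm_ring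
    have a22 : (0 : R) * -(k * τ) + 1 * 1 = 1 := by noncomm_ring
    rw [a11, a12, a21, a22]; exact Matrix.one_fin_two.symm
  have hMT : !![A, p; B, q] * !![(1 : R), c; 0, 1] = !![A, k; B, B * c + q] := by
    rw [Matrix.mul_fin_two]
    have b11 : A * 1 + p * 0 = A := by noncomm_ring
    have b12 : A * c + p * 1 = k := by rw [hk]; noncomm_ring
    have b21 : B * 1 + q * 0 = B := by noncomm_ring
    have b22 : B * c + q * 1 = B * c + q := by noncomm_ring
    rw [b11, b12, b21, b22]
  have hLMT : !![(1 : R), -(k * τ); 0, 1] * (!![A, p; B, q] * !![(1 : R), c; 0, 1])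
      = !![A + -(k * τ) * B, 0; B, B * c + q] := by
    rw [hMT, Matrix.mul_fin_two]
    have c11 : (1 : R) * A + -(k * τ) * B = A + -(k * τ) * B := by noncomm_ring
    have c12 : (1 : R) * k + -(k * τ) * (B * c + q) = 0 := by
      calc (1 : R) * k + -(k * τ) * (B * c + q)
          = k - k * (τ * (q + B * c)) := by noncomm_ring
      _ = 0 := by rw [hv2]; noncomm_ring
    have c21 : (0 : R) * A + 1 * B = B := by noncomm_ring
    have c22 : (0 : R) * k + 1 * (B * c + q) = B * c + q := by noncomm_ring
    rw [c11, c12, c21, c22]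
  set Z : Matrix (Fin 2) (Fin 2) R :=
    !![(1 : R), -c; 0, 1] * (!![x, y; 1 - g * x, -(g * y) - d] * !![(1 : R), k * τ; 0, 1])
    with hZdef
  have hGZ : !![A + -(k * τ) * B, 0; B, B * c + q] * Z = 1 := by
    rw [← hLMT, hZdef]
    calc !![(1 : R), -(k * τ); 0, 1] * (!![A, p; B, q] * !![(1 : R), c; 0, 1]) *
          (!![(1 : R), -c; 0, 1] * (!![x, y; 1 - g * x, -(g * y) - d] * !![(1 : R), k * τ; 0, 1]))
        = !![(1 : R), -(k * τ); 0, 1] * (!![A, p; B, q] *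
            ((!![(1 : R), c; 0, 1] * !![(1 : R), -c; 0, 1]) *
              (!![x, y; 1 - g * x, -(g * y) - d] * !![(1 : R), k * τ; 0, 1]))) := by
          noncomm_ring
    _ = !![(1 : R), -(k * τ); 0, 1] *
          ((!![A, p; B, q] * !![x, y; 1 - g * x, -(g * y) - d]) * !![(1 : R), k * τ; 0, 1]) := by
          rw [hTT', one_mul]; noncomm_ring
    _ = !![(1 : R), -(k * τ); 0, 1] * !![(1 : R), k * τ; 0, 1] := by rw [hM0N, one_mul]
    _ = 1 := hLL'
  have hZG : Z * !![A + -(k * τ) * B, 0; B, B * c + q] = 1 := by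
    rw [← hLMT, hZdef]
    calc !![(1 : R), -c; 0, 1] * (!![x, y; 1 - g * x, -(g * y) - d] * !![(1 : R), k * τ; 0, 1]) *
          (!![(1 : R), -(k * τ); 0, 1] * (!![A, p; B, q] * !![(1 : R), c; 0, 1]))
        = !![(1 : R), -c; 0, 1] * (!![x, y; 1 - g * x, -(g * y) - d] *
            ((!![(1 : R), k * τ; 0, 1] * !![(1 : R), -(k * τ); 0, 1]) *
              (!![A, p; B, q] * !![(1 : R), c; 0, 1]))) := by
          noncomm_ring
    _ = !![(1 : R), -c; 0, 1] *
          ((!![x, y; 1 - g * x, -(g * y) - d] * !![A, p; B, q]) * !![(1 : R), c; 0, 1]) := by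
          rw [hL'L, one_mul]; noncomm_ring
    _ = !![(1 : R), -c; 0, 1] * !![(1 : R), c; 0, 1] := by rw [hNM0, one_mul]
    _ = 1 := hT'T
  -- extract the (0,0) entries
  have h01 : Z 0 1 * (B * c + q) = 0 := by
    have hent : (Z * !![A + -(k * τ) * B, 0; B, B * c + q]) 0 1
        = (1 : Matrix (Fin 2) (Fin 2) R) 0 1 := by rw [hZG]
    rw [Matrix.mul_apply, Fin.sum_univ_two] at hent
    simpa [Matrix.one_apply] using hent
  have hZ01 : Z 0 1 = 0 := by
    calc Z 0 1 = Z 0 1 * ((q + B * c) * τ) := by rw [hv1]; noncomm_ring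
    _ = (Z 0 1 * (B * c + q)) * τ := by noncomm_ring
    _ = 0 := by rw [h01]; noncomm_ring
  have h00 : Z 0 0 * (A + -(k * τ) * B) + Z 0 1 * B = 1 := by
    have hent : (Z * !![A + -(k * τ) * B, 0; B, B * c + q]) 0 0
        = (1 : Matrix (Fin 2) (Fin 2) R) 0 0 := by rw [hZG]
    rw [Matrix.mul_apply, Fin.sum_univ_two] at hent
    simpa [Matrix.one_apply] using hent
  have hleft : Z 0 0 * (A + -(k * τ) * B) = 1 := by
    rw [hZ01] at h00
    simpa using h00
  have hright : (A + -(k * τ) * B) * Z 0 0 = 1 := by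
    have hent : (!![A + -(k * τ) * B, 0; B, B * c + q] * Z) 0 0
        = (1 : Matrix (Fin 2) (Fin 2) R) 0 0 := by rw [hGZ]
    rw [Matrix.mul_apply, Fin.sum_univ_two] at hent
    simpa [Matrix.one_apply] using hent
  exact ⟨-(k * τ), ⟨⟨A + -(k * τ) * B, Z 0 0, hright, hleft⟩, rfl⟩⟩

theorem stmt2 {R : Type*} [Ring R] [Nontrivial R] (hR : StableRange1 R)
    (hK : LeftKazimirsky R) (a b : R) (h : ∃ x y : R, a * x + b * y = 1) :
    ∃ x y : R, x * a + y * b = 1 := by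
  -- Stable range 1 : get a unit u = a + b*t.
  obtain ⟨t, ht⟩ := hR a b h
  obtain ⟨u, hu⟩ := ht
  set ω : R := ((u⁻¹ : Rˣ) : R) with hω
  have hu2 : ω * (a + b * t) = 1 := by rw [← hu, hω]; exact u.inv_mul
  -- Hence (ω*b)*t + ω*a = 1; apply the symmetry lemma to the column (t; a).
  have hcol : (ω * b) * t + ω * a = 1 := by
    calc (ω * b) * t + ω * a = ω * (a + b * t) := by noncomm_ring
    _ = 1 := hu2
  obtain ⟨z, hz⟩ := sr1_left_reduce hR (ω * b) ω t a hcol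
  obtain ⟨W, hW⟩ := hz
  -- Left Kazimirsky condition applied to b and the unit t + z*a.
  obtain ⟨s, hs⟩ := hK b (t + z * a) (hW ▸ W.isUnit) 1
  have hbW : b * (t + z * a) = s * b := by rw [one_mul] at hs; exact hs
  -- Assemble the left relation.
  refine ⟨ω - (ω * b) * z, ω * s, ?_⟩
  calc (ω - (ω * b) * z) * a + (ω * s) * b
      = ω * a - ω * (b * (z * a)) + ω * (s * b) := by noncomm_ring
  _ = ω * a - ω * (b * (z * a)) + ω * (b * (t + z * a)) := by rw [← hbW]
  _ = ω * (a + b * t) := by noncomm_ring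
  _ = 1 := hu2
end

section
/- Let R be a ring of stable range 1 satisfying the left Kazimirsky condition. Then every maximal left ideal of R is a two-sided ideal (i.e., R is a left quasi-duo ring). -/
section Aux

variable {R : Type*} [Ring R]

/-- If the triangular matrix `!![A, c; 0, 1]` is a unit, then `A` is a unit. -/
lemma isUnit_of_triangular (A c : R) (h : IsUnit (!![A, c; (0 : R), 1])) : IsUnit A := by
  obtain ⟨u, hu⟩ := h
  have h1 : !![A, c; (0 : R), 1] * (Units.val u⁻¹) = 1 := by
    rw [← hu]; exact u.mul_inv
  have h2 : (Units.val u⁻¹) * !![A, c; (0 : R), 1] = 1 := by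
    rw [← hu]; exact u.inv_mul
  set Y : Matrix (Fin 2) (Fin 2) R := (Units.val u⁻¹) with hY
  have e10 : Y 1 0 = 0 := by
    have := congrFun (congrFun h1 1) 0
    simpa [Matrix.mul_apply, Fin.sum_univ_two, Matrix.one_apply] using this
  have e00 : A * Y 0 0 = 1 := by
    have h' := congrFun (congrFun h1 0) 0
    simp [Matrix.mul_apply, Fin.sum_univ_two, Matrix.one_apply, e10] at h'
    simpa using h'
  have f00 : Y 0 0 * A = 1 := by
    have h' := congrFun (congrFun h2 0) 0
    simpa [Matrix.mul_apply, Fin.sum_univ_two, Matrix.one_apply] using h'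
  exact isUnit_iff_exists.mpr ⟨Y 0 0, e00, f00⟩

/-- Vaserstein symmetry: from (right) stable range one we get left reducibility of
left-unimodular pairs. -/
theorem left_sr1 (hR : StableRange1 R) (a b : R)
    (h : ∃ x y : R, x * a + y * b = 1) : ∃ t : R, IsUnit (a + t * b) := by
  obtain ⟨x, y, hxy⟩ := h
  obtain ⟨s, hv⟩ := hR x y ⟨a, b, hxy⟩
  obtain ⟨V, hV⟩ := hv
  set vi : R := (Units.val V⁻¹) with hvi
  have hv1 : (x + y * s) * vi = 1 := by rw [hvi, ← hV]; exact V.mul_inv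
  have hv2 : vi * (x + y * s) = 1 := by rw [hvi, ← hV]; exact V.inv_mul
  set ξ : R := b - s * a with hξ
  have hxa : x * a = 1 - y * b := eq_sub_of_add_eq hxy
  have hva : (x + y * s) * a = 1 - y * ξ := by
    rw [hξ, add_mul, hxa]; noncomm_ring
  have ha : vi * (1 - y * ξ) = a := by
    calc vi * (1 - y * ξ) = vi * ((x + y * s) * a) := by rw [hva]
      _ = (vi * (x + y * s)) * a := by rw [mul_assoc]
      _ = a := by rw [hv2, one_mul]
  have hay : vi * (y * (1 - ξ * y)) = a * y := by
    have h' : y * (1 - ξ * y) = (1 - y * ξ) * y := by noncomm_ring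
    rw [h', ← mul_assoc, ha]
  set m₂ : R := 1 - s * vi * y with hm₂
  have key : m₂ * (1 - ξ * y) + b * y = 1 := by
    have expand : m₂ * (1 - ξ * y) + b * y
        = (1 - ξ * y) - s * (vi * (y * (1 - ξ * y))) + b * y := by
      rw [hm₂]; noncomm_ring
    rw [expand, hay, hξ]; noncomm_ring
  obtain ⟨τ, hw⟩ := hR m₂ b ⟨1 - ξ * y, y, key⟩
  obtain ⟨W, hW⟩ := hw
  set wi : R := (Units.val W⁻¹) with hwi
  have hw1 : (m₂ + b * τ) * wi = 1 := by rw [hwi, ← hW]; exact W.mul_inv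
  set c : R := (a * τ - vi * y) * wi with hc
  -- the unit matrices
  have hPhii : IsUnit (!![vi, -(vi * y); s * vi, 1 - s * vi * y] : Matrix (Fin 2) (Fin 2) R) := by
    refine isUnit_iff_exists.mpr ⟨!![x, y; -s, 1], ?_, ?_⟩
    · rw [Matrix.mul_fin_two, Matrix.one_fin_two]
      have e11 : vi * x + -(vi * y) * -s = 1 := by
        have h' : vi * x + -(vi * y) * -s = vi * (x + y * s) := by noncomm_ring
        rw [h', hv2]
      have e12 : vi * y + -(vi * y) * 1 = 0 := by noncomm_ring
      have e21 : s * vi * x + (1 - s * vi * y) * -s = 0 := by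
        have h' : s * vi * x + (1 - s * vi * y) * -s = s * (vi * (x + y * s)) - s := by
          noncomm_ring
        rw [h', hv2, mul_one, sub_self]
      have e22 : s * vi * y + (1 - s * vi * y) * 1 = 1 := by noncomm_ring
      rw [e11, e12, e21, e22]
    · rw [Matrix.mul_fin_two, Matrix.one_fin_two]
      have e11 : x * vi + y * (s * vi) = 1 := by
        have h' : x * vi + y * (s * vi) = (x + y * s) * vi := by noncomm_ring
        rw [h', hv1]
      have e12 : x * -(vi * y) + y * (1 - s * vi * y) = 0 := by
        have h' : x * -(vi * y) + y * (1 - s * vi * y) = y - ((x + y * s) * vi) * y := by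
          noncomm_ring
        rw [h', hv1, one_mul, sub_self]
      have e21 : -s * vi + 1 * (s * vi) = 0 := by noncomm_ring
      have e22 : -s * -(vi * y) + 1 * (1 - s * vi * y) = 1 := by noncomm_ring
      rw [e11, e12, e21, e22]
  have hU1 : IsUnit (!![1, 0; ξ, 1] : Matrix (Fin 2) (Fin 2) R) := by
    refine isUnit_iff_exists.mpr ⟨!![1, 0; -ξ, 1], ?_, ?_⟩ <;>
      · rw [Matrix.mul_fin_two, Matrix.one_fin_two]
        norm_num
  have hU2 : IsUnit (!![1, τ; 0, 1] : Matrix (Fin 2) (Fin 2) R) := by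
    refine isUnit_iff_exists.mpr ⟨!![1, -τ; 0, 1], ?_, ?_⟩ <;>
      · rw [Matrix.mul_fin_two, Matrix.one_fin_two]
        norm_num
  have hD : IsUnit (!![1, 0; 0, wi] : Matrix (Fin 2) (Fin 2) R) := by
    refine isUnit_iff_exists.mpr ⟨!![1, 0; 0, (Units.val W)], ?_, ?_⟩
    · rw [Matrix.mul_fin_two, Matrix.one_fin_two]
      have h' : wi * (Units.val W) = 1 := by rw [hwi]; exact W.inv_mul
      rw [h']; norm_num
    · rw [Matrix.mul_fin_two, Matrix.one_fin_two]
      have h' : (Units.val W) * wi = 1 := by rw [hwi]; exact W.mul_inv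
      rw [h']; norm_num
  have hL : IsUnit (!![1, 0; -b, 1] : Matrix (Fin 2) (Fin 2) R) := by
    refine isUnit_iff_exists.mpr ⟨!![1, 0; b, 1], ?_, ?_⟩ <;>
      · rw [Matrix.mul_fin_two, Matrix.one_fin_two]
        norm_num
  -- the products
  have hP1 : (!![vi, -(vi * y); s * vi, 1 - s * vi * y] : Matrix (Fin 2) (Fin 2) R)
      * !![1, 0; ξ, 1] = !![a, -(vi * y); b, m₂] := by
    rw [Matrix.mul_fin_two]
    have e11 : vi * 1 + -(vi * y) * ξ = a := by
      have h' : vi * 1 + -(vi * y) * ξ = vi * (1 - y * ξ) := by noncomm_ring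
      rw [h', ha]
    have e12 : vi * 0 + -(vi * y) * 1 = -(vi * y) := by noncomm_ring
    have e21 : s * vi * 1 + (1 - s * vi * y) * ξ = b := by
      have h' : s * vi * 1 + (1 - s * vi * y) * ξ = s * (vi * (1 - y * ξ)) + ξ := by noncomm_ring
      rw [h', ha, hξ]; noncomm_ring
    have e22 : s * vi * 0 + (1 - s * vi * y) * 1 = m₂ := by rw [hm₂]; noncomm_ring
    rw [e11, e12, e21, e22]
  have hP2 : (!![a, -(vi * y); b, m₂] : Matrix (Fin 2) (Fin 2) R)
      * !![1, τ; 0, 1] = !![a, a * τ - vi * y; b, m₂ + b * τ] := by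
    rw [Matrix.mul_fin_two]
    have e11 : a * 1 + -(vi * y) * 0 = a := by noncomm_ring
    have e12 : a * τ + -(vi * y) * 1 = a * τ - vi * y := by noncomm_ring
    have e21 : b * 1 + m₂ * 0 = b := by noncomm_ring
    have e22 : b * τ + m₂ * 1 = m₂ + b * τ := by noncomm_ring
    rw [e11, e12, e21, e22]
  have hP3 : (!![a, a * τ - vi * y; b, m₂ + b * τ] : Matrix (Fin 2) (Fin 2) R)
      * !![1, 0; 0, wi] = !![a, c; b, 1] := by
    rw [Matrix.mul_fin_two]
    have e11 : a * 1 + (a * τ - vi * y) * 0 = a := by noncomm_ring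
    have e12 : a * 0 + (a * τ - vi * y) * wi = c := by rw [hc]; noncomm_ring
    have e21 : b * 1 + (m₂ + b * τ) * 0 = b := by noncomm_ring
    have e22 : b * 0 + (m₂ + b * τ) * wi = 1 := by
      have h' : b * 0 + (m₂ + b * τ) * wi = (m₂ + b * τ) * wi := by noncomm_ring
      rw [h', hw1]
    rw [e11, e12, e21, e22]
  have hP4 : (!![a, c; b, 1] : Matrix (Fin 2) (Fin 2) R)
      * !![1, 0; -b, 1] = !![a - c * b, c; 0, 1] := by
    rw [Matrix.mul_fin_two]
    have e11 : a * 1 + c * -b = a - c * b := by noncomm_ring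
    have e12 : a * 0 + c * 1 = c := by noncomm_ring
    have e21 : b * 1 + 1 * -b = (0 : R) := by noncomm_ring
    have e22 : b * 0 + 1 * 1 = (1 : R) := by noncomm_ring
    rw [e11, e12, e21, e22]
  have hfinal : IsUnit (!![a - c * b, c; (0 : R), 1]) := by
    have hprod := (((hPhii.mul hU1).mul hU2).mul hD).mul hL
    rwa [hP1, hP2, hP3, hP4] at hprod
  refine ⟨-c, ?_⟩
  have h' : a + -c * b = a - c * b := by noncomm_ring
  rw [h']
  exact isUnit_of_triangular _ _ hfinal

end Aux

theorem stmt3 {R : Type*} [Ring R] [Nontrivial R] (hR : StableRange1 R)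
    (hK : LeftKazimirsky R) (M : Ideal R) (hM : M.IsMaximal) :
    ∀ m ∈ M, ∀ r : R, m * r ∈ M := by
  intro m hm r
  by_cases hr : r ∈ M
  · have := M.smul_mem m hr
    simpa [smul_eq_mul] using this
  · -- maximality gives z ∈ M and cc with cc * r + z = 1
    have hlt : M < M ⊔ Ideal.span {r} := by
      refine lt_of_le_of_ne le_sup_left (fun h => hr ?_)
      have hmem : r ∈ M ⊔ Ideal.span {r} :=
        (le_sup_right : Ideal.span {r} ≤ M ⊔ Ideal.span {r})
          (Ideal.subset_span (Set.mem_singleton r))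
      rwa [← h] at hmem
    have hsup : M ⊔ Ideal.span {r} = ⊤ := hM.out.2 _ hlt
    have hone : (1 : R) ∈ M ⊔ Ideal.span {r} := by rw [hsup]; exact Submodule.mem_top
    obtain ⟨z, hz, w, hw, hzw⟩ := Submodule.mem_sup.mp hone
    obtain ⟨cc, hcc⟩ := Submodule.mem_span_singleton.mp hw
    have hrel : cc * r + 1 * z = 1 := by
      rw [one_mul]
      rw [← smul_eq_mul] at *
      rw [hcc]
      rw [add_comm] at hzw
      exact hzw
    obtain ⟨t, hu⟩ := left_sr1 hR r z ⟨cc, 1, hrel⟩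
    obtain ⟨sK, hsK⟩ := hK m (r + t * z) hu 1
    -- hsK : 1 * (m * (r + t * z)) = sK * m
    have hmu : m * (r + t * z) = sK * m := by rwa [one_mul] at hsK
    have hmr : m * r = sK * m - m * (t * z) := by
      have hh : m * (r + t * z) = m * r + m * (t * z) := by noncomm_ring
      rw [hh] at hmu
      exact eq_sub_of_add_eq hmu
    have h1 : sK * m ∈ M := by
      have := M.smul_mem sK hm
      simpa [smul_eq_mul] using this
    have h2 : m * (t * z) ∈ M := by
      have := M.smul_mem (m * t) hz
      simpa [smul_eq_mul, mul_assoc] using this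
    rw [hmr]
    exact Submodule.sub_mem M h1 h2
end

section
/- Let R be a ring of unit stable range 1 (for all a, b ∈ R with aR + bR = R there exists a unit u ∈ R with a + bu a unit). Then every nonzero element a ∈ R can be written as a sum of two units, a = u + w. -/
theorem stmt5 {R : Type*} [Ring R] [Nontrivial R] (hR : UnitStableRange1 R) :
    ∀ a : R, a ≠ 0 → ∃ u w : R, IsUnit u ∧ IsUnit w ∧ a = u + w := by
  intro a _
  obtain ⟨u, hu, hau⟩ := hR a 1 ⟨0, 1, by simp⟩
  exact ⟨a + 1 * u, -u, hau, hu.neg, by noncomm_ring⟩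
end

section
/- Let R be a ring of unit stable range 1 satisfying the right Kazimirsky condition (for every b ∈ R and every unit u ∈ R, ubR ⊆ bR). Then R is a left duo ring: for all a, b ∈ R, ab ∈ bR (equivalently Rb ⊆ bR). -/
theorem stmt6 {R : Type*} [Ring R] [Nontrivial R] (hR : UnitStableRange1 R)
    (hK : RightKazimirsky R) : ∀ a b : R, ∃ s : R, a * b = b * s := by
  intro a b
  obtain ⟨u, hu, hau⟩ := hR a 1 ⟨0, 1, by noncomm_ring⟩
  obtain ⟨s₁, hs₁⟩ := hK b (a + 1 * u) hau 1
  obtain ⟨s₂, hs₂⟩ := hK b u hu 1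
  refine ⟨s₁ - s₂, ?_⟩
  have : (a + 1 * u) * (b * 1) - u * (b * 1) = a * b := by noncomm_ring
  rw [mul_sub, ← hs₁, ← hs₂, this]
end

section
/- Let R be a ring of stable range 1 satisfying both the left and the right Kazimirsky condition. Then for all a, b ∈ R, aR + bR = R if and only if Ra + Rb = R. -/
/-- Vaserstein's theorem (one-sided version): a ring with (right) stable range 1
also has left stable range 1. Proved by an explicit 2×2-matrix-style computation. -/
lemma left_sr1_of_stableRange1 {R : Type*} [Ring R] (hR : StableRange1 R) (a b : R)
    (h : ∃ z w : R, z * a + w * b = 1) : ∃ y : R, IsUnit (a + y * b) := by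
  obtain ⟨z, w, h⟩ := h
  obtain ⟨s, hvu⟩ := hR z w ⟨a, b, h⟩
  obtain ⟨v, hv⟩ := hvu
  -- hv : ↑v = z + w * s
  have hVv : (↑v⁻¹ : R) * (z + w * s) = 1 := by rw [← hv]; exact v.inv_mul
  have hvV : (z + w * s) * (↑v⁻¹ : R) = 1 := by rw [← hv]; exact v.mul_inv
  have I1 : (z + w * s) * a + w * (b - s * a) = 1 := by
    have e : (z + w * s) * a + w * (b - s * a) = z * a + w * b := by noncomm_ring
    rw [e, h]
  have hw1 : w * (b - s * a) = 1 - (z + w * s) * a := by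
    have := I1
    linear_combination (norm := noncomm_ring) this
  have ha : (↑v⁻¹ : R) * (1 - w * (b - s * a)) = a := by
    have e1 : (z + w * s) * a = 1 - w * (b - s * a) := by
      linear_combination (norm := noncomm_ring) I1
    calc (↑v⁻¹ : R) * (1 - w * (b - s * a)) = (↑v⁻¹ : R) * ((z + w * s) * a) := by rw [e1]
      _ = ((↑v⁻¹ : R) * (z + w * s)) * a := by rw [mul_assoc]
      _ = a := by rw [hVv, one_mul]
  have I2 : (1 - s * ↑v⁻¹ * w) * (1 - (b - s * a) * w) + b * w = 1 := by
    have e : (1 - s * ↑v⁻¹ * w) * (1 - (b - s * a) * w) + b * w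
        = 1 + s * a * w - s * ((↑v⁻¹ : R) * (1 - w * (b - s * a))) * w := by noncomm_ring
    rw [e, ha]; noncomm_ring
  obtain ⟨x, hdu⟩ := hR (1 - s * ↑v⁻¹ * w) b ⟨1 - (b - s * a) * w, w, I2⟩
  obtain ⟨d, hd⟩ := hdu
  -- hd : ↑d = (1 - s * ↑v⁻¹ * w) + b * x
  have hdE : (↑d : R) * ↑d⁻¹ = 1 := d.mul_inv
  have hEd : (↑d⁻¹ : R) * ↑d = 1 := d.inv_mul
  refine ⟨(↑v⁻¹ * w - a * x) * ↑d⁻¹, ?_⟩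
  set g : R := (1 + x * (b - s * a)) * z + x * s with hg
  have J1 : a * g + (↑v⁻¹ * w - a * x) * ((b - s * a) * z + s) = 1 := by
    calc a * g + (↑v⁻¹ * w - a * x) * ((b - s * a) * z + s)
        = a * z + (↑v⁻¹ : R) * (w * (b - s * a)) * z + (↑v⁻¹ : R) * (w * s) := by
          rw [hg]; noncomm_ring
      _ = a * z + (↑v⁻¹ : R) * (1 - (z + w * s) * a) * z + (↑v⁻¹ : R) * (w * s) := by rw [hw1]
      _ = a * z + (↑v⁻¹ : R) * z - ((↑v⁻¹ : R) * (z + w * s)) * (a * z)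
            + (↑v⁻¹ : R) * (w * s) := by noncomm_ring
      _ = a * z + (↑v⁻¹ : R) * z - 1 * (a * z) + (↑v⁻¹ : R) * (w * s) := by rw [hVv]
      _ = (↑v⁻¹ : R) * (z + w * s) := by noncomm_ring
      _ = 1 := hVv
  have J2 : (↑d : R) * ((b - s * a) * z + s) = b * g := by
    calc (↑d : R) * ((b - s * a) * z + s)
        = ((1 - s * ↑v⁻¹ * w) + b * x) * ((b - s * a) * z + s) := by rw [hd]
      _ = (b - s * a) * z + s
            - s * (((↑v⁻¹ : R) * (w * (b - s * a))) * z + (↑v⁻¹ : R) * (w * s))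
            + b * (x * ((b - s * a) * z + s)) := by noncomm_ring
      _ = (b - s * a) * z + s
            - s * (((↑v⁻¹ : R) * (1 - (z + w * s) * a)) * z + (↑v⁻¹ : R) * (w * s))
            + b * (x * ((b - s * a) * z + s)) := by rw [hw1]
      _ = (b - s * a) * z + s
            - s * ((↑v⁻¹ : R) * (z + w * s) - ((↑v⁻¹ : R) * (z + w * s)) * (a * z))
            + b * (x * ((b - s * a) * z + s)) := by noncomm_ring
      _ = (b - s * a) * z + s - s * (1 - 1 * (a * z))
            + b * (x * ((b - s * a) * z + s)) := by rw [hVv]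
      _ = b * g := by rw [hg]; noncomm_ring
  have h₁ : (a + ((↑v⁻¹ * w - a * x) * ↑d⁻¹) * b) * g = 1 := by
    calc (a + ((↑v⁻¹ * w - a * x) * ↑d⁻¹) * b) * g
        = a * g + (↑v⁻¹ * w - a * x) * ((↑d⁻¹ : R) * (b * g)) := by noncomm_ring
      _ = a * g + (↑v⁻¹ * w - a * x) * ((↑d⁻¹ : R) * ((↑d : R) * ((b - s * a) * z + s))) := by
          rw [J2]
      _ = a * g + (↑v⁻¹ * w - a * x) * (((↑d⁻¹ : R) * ↑d) * ((b - s * a) * z + s)) := by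
          noncomm_ring
      _ = a * g + (↑v⁻¹ * w - a * x) * (1 * ((b - s * a) * z + s)) := by rw [hEd]
      _ = a * g + (↑v⁻¹ * w - a * x) * ((b - s * a) * z + s) := by noncomm_ring
      _ = 1 := J1
  have hza : z * a = 1 - w * b := by linear_combination (norm := noncomm_ring) h
  have hga : g * a = 1 - w * b + x * ((1 - (b - s * a) * w) * b) := by
    calc g * a = (1 + x * (b - s * a)) * (z * a) + x * (s * a) := by rw [hg]; noncomm_ring
      _ = (1 + x * (b - s * a)) * (1 - w * b) + x * (s * a) := by rw [hza]
      _ = 1 - w * b + x * ((1 - (b - s * a) * w) * b) := by noncomm_ring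
  have hzV : z * (↑v⁻¹ : R) = 1 - w * (s * ↑v⁻¹) := by
    calc z * (↑v⁻¹ : R) = (z + w * s) * (↑v⁻¹ : R) - w * (s * ↑v⁻¹) := by noncomm_ring
      _ = 1 - w * (s * ↑v⁻¹) := by rw [hvV]
  have hgVw : g * ((↑v⁻¹ : R) * w)
      = (w - x * (1 - (b - s * a) * w)) * (1 - s * ↑v⁻¹ * w) + x := by
    calc g * ((↑v⁻¹ : R) * w)
        = (1 + x * (b - s * a)) * ((z * (↑v⁻¹ : R)) * w) + x * ((s * (↑v⁻¹ : R)) * w) := by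
          rw [hg]; noncomm_ring
      _ = (1 + x * (b - s * a)) * ((1 - w * (s * ↑v⁻¹)) * w) + x * ((s * (↑v⁻¹ : R)) * w) := by
          rw [hzV]
      _ = (w - x * (1 - (b - s * a) * w)) * (1 - s * ↑v⁻¹ * w) + x := by noncomm_ring
  have hgy : g * ((↑v⁻¹ * w - a * x) * ↑d⁻¹) = w - x * (1 - (b - s * a) * w) := by
    calc g * ((↑v⁻¹ * w - a * x) * ↑d⁻¹)
        = (g * ((↑v⁻¹ : R) * w) - (g * a) * x) * ↑d⁻¹ := by noncomm_ring
      _ = ((w - x * (1 - (b - s * a) * w)) * (1 - s * ↑v⁻¹ * w) + x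
            - (1 - w * b + x * ((1 - (b - s * a) * w) * b)) * x) * ↑d⁻¹ := by rw [hgVw, hga]
      _ = ((w - x * (1 - (b - s * a) * w)) * ((1 - s * ↑v⁻¹ * w) + b * x)) * ↑d⁻¹ := by
          noncomm_ring
      _ = ((w - x * (1 - (b - s * a) * w)) * ↑d) * ↑d⁻¹ := by rw [hd]
      _ = (w - x * (1 - (b - s * a) * w)) * ((↑d : R) * ↑d⁻¹) := by noncomm_ring
      _ = w - x * (1 - (b - s * a) * w) := by rw [hdE, mul_one]
  have h₂ : g * (a + ((↑v⁻¹ * w - a * x) * ↑d⁻¹) * b) = 1 := by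
    calc g * (a + ((↑v⁻¹ * w - a * x) * ↑d⁻¹) * b)
        = g * a + (g * ((↑v⁻¹ * w - a * x) * ↑d⁻¹)) * b := by noncomm_ring
      _ = (1 - w * b + x * ((1 - (b - s * a) * w) * b))
            + (w - x * (1 - (b - s * a) * w)) * b := by rw [hga, hgy]
      _ = 1 := by noncomm_ring
  exact ⟨⟨a + ((↑v⁻¹ * w - a * x) * ↑d⁻¹) * b, g, h₁, h₂⟩, rfl⟩

theorem stmt9 {R : Type*} [Ring R] [Nontrivial R] (hR : StableRange1 R)
    (hL : LeftKazimirsky R) (hrK : RightKazimirsky R) (a b : R) :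
    (∃ x y : R, a * x + b * y = 1) ↔ (∃ x y : R, x * a + y * b = 1) := by
  constructor
  · rintro ⟨x, y, hxy⟩
    obtain ⟨t, hu⟩ := hR a b ⟨x, y, hxy⟩
    obtain ⟨u, hu'⟩ := hu
    obtain ⟨z, hz⟩ := hrK b (↑u⁻¹) u⁻¹.isUnit t
    -- hz : ↑u⁻¹ * (b * t) = b * z
    have hq : (↑u⁻¹ : R) * a + b * z = 1 := by
      calc (↑u⁻¹ : R) * a + b * z = (↑u⁻¹ : R) * a + (↑u⁻¹ : R) * (b * t) := by rw [hz]
        _ = (↑u⁻¹ : R) * (a + b * t) := by rw [mul_add]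
        _ = (↑u⁻¹ : R) * ↑u := by rw [hu']
        _ = 1 := u.inv_mul
    obtain ⟨c, hnu⟩ := left_sr1_of_stableRange1 hR z ((↑u⁻¹ : R) * a)
      ⟨b, 1, by rw [one_mul, add_comm]; exact hq⟩
    obtain ⟨n, hn⟩ := hnu
    -- hn : ↑n = z + c * (↑u⁻¹ * a)
    obtain ⟨σ, hσ⟩ := hL b (↑n) n.isUnit 1
    -- hσ : 1 * (b * ↑n) = σ * b
    have hbn : b * (↑n : R) = σ * b := by rw [← hσ, one_mul]
    refine ⟨(1 - b * c) * ↑u⁻¹, σ, ?_⟩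
    calc (1 - b * c) * (↑u⁻¹ : R) * a + σ * b
        = (1 - b * c) * (↑u⁻¹ : R) * a + b * (↑n : R) := by rw [← hbn]
      _ = (1 - b * c) * (↑u⁻¹ : R) * a + b * (z + c * ((↑u⁻¹ : R) * a)) := by rw [hn]
      _ = (↑u⁻¹ : R) * a + b * z := by noncomm_ring
      _ = 1 := hq
  · rintro ⟨x, y, hxy⟩
    obtain ⟨t, hu⟩ := left_sr1_of_stableRange1 hR a b ⟨x, y, hxy⟩
    obtain ⟨u, hu'⟩ := hu
    -- hu' : ↑u = a + t * b
    obtain ⟨z, hz⟩ := hL b (↑u⁻¹) u⁻¹.isUnit t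
    -- hz : t * (b * ↑u⁻¹) = z * b
    have hq : a * (↑u⁻¹ : R) + z * b = 1 := by
      calc a * (↑u⁻¹ : R) + z * b = a * (↑u⁻¹ : R) + t * (b * (↑u⁻¹ : R)) := by rw [hz]
        _ = (a + t * b) * (↑u⁻¹ : R) := by noncomm_ring
        _ = ↑u * (↑u⁻¹ : R) := by rw [hu']
        _ = 1 := u.mul_inv
    obtain ⟨c, hnu⟩ := hR z (a * (↑u⁻¹ : R)) ⟨b, 1, by rw [mul_one, add_comm]; exact hq⟩
    obtain ⟨n, hn⟩ := hnu
    -- hn : ↑n = z + a * ↑u⁻¹ * c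
    obtain ⟨σ, hσ⟩ := hrK b (↑n) n.isUnit 1
    -- hσ : ↑n * (b * 1) = b * σ
    have hnb : (↑n : R) * b = b * σ := by rw [← hσ, mul_one]
    refine ⟨(↑u⁻¹ : R) * (1 - c * b), σ, ?_⟩
    calc a * ((↑u⁻¹ : R) * (1 - c * b)) + b * σ
        = a * ((↑u⁻¹ : R) * (1 - c * b)) + (↑n : R) * b := by rw [← hnb]
      _ = a * ((↑u⁻¹ : R) * (1 - c * b)) + (z + a * (↑u⁻¹ : R) * c) * b := by rw [hn]
      _ = a * (↑u⁻¹ : R) + z * b := by noncomm_ring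
      _ = 1 := hq
end

section
/- Let R be a ring of stable range 1 satisfying the right Kazimirsky condition (uaR ⊆ aR for all a ∈ R and units u). Then every maximal right ideal of R is a two-sided ideal (R is right quasi-duo). -/
theorem stmt10 {R : Type*} [Ring R] [Nontrivial R] (hR : StableRange1 R)
    (hK : RightKazimirsky R) (M : Ideal Rᵐᵒᵖ) (hM : M.IsMaximal) :
    ∀ m : R, MulOpposite.op m ∈ M → ∀ r : R, MulOpposite.op (r * m) ∈ M := by
  intro m hm r
  by_contra hrm
  -- M + (rm)·R = R by maximality
  have htop : M ⊔ Ideal.span {MulOpposite.op (r * m)} = ⊤ := by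
    by_contra hne
    have heq := hM.eq_of_le hne le_sup_left
    exact hrm (heq ▸ (le_sup_right.trans heq.ge)
      (Ideal.subset_span (Set.mem_singleton _)))
  have h1 : (1 : Rᵐᵒᵖ) ∈ M ⊔ Ideal.span {MulOpposite.op (r * m)} := by
    rw [htop]; exact Submodule.mem_top
  rcases Submodule.mem_sup.mp h1 with ⟨y, hy, z, hz, hyz⟩
  rcases Ideal.mem_span_singleton'.mp hz with ⟨c, hc⟩
  -- translate to R : 1 = r * m * c.unop + y.unop
  have heq : r * (m * c.unop) + y.unop * 1 = 1 := by
    have := congrArg MulOpposite.unop hyz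
    simp only [MulOpposite.unop_add, MulOpposite.unop_one] at this
    rw [← hc] at this
    simp only [MulOpposite.unop_mul, MulOpposite.unop_op] at this
    rw [mul_one, ← mul_assoc, add_comm]
    exact this
  obtain ⟨t, hu⟩ := hR r y.unop ⟨m * c.unop, 1, heq⟩
  obtain ⟨s, hs⟩ := hK m (r + y.unop * t) hu 1
  -- r * m = m * s - y.unop * (t * m)
  have key : r * m = m * s - y.unop * (t * m) := by
    rw [mul_one] at hs
    have : (r + y.unop * t) * m = m * s := hs
    rw [add_mul] at this
    rw [← this]; noncomm_ring
  apply hrm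
  rw [key]
  have h1 : MulOpposite.op (m * s) ∈ M := by
    rw [MulOpposite.op_mul]
    exact M.mul_mem_left _ hm
  have h2 : MulOpposite.op (y.unop * (t * m)) ∈ M := by
    rw [MulOpposite.op_mul]
    have : MulOpposite.op y.unop ∈ M := by simpa using hy
    exact M.mul_mem_left _ this
  simpa using M.sub_mem h1 h2
end

section
/- Let R be a ring in which 2 is a unit and such that for all a, b ∈ R with aR + bR = R there exists a unit u with a + bu a unit (unit stable range 1). Then every element of R is a sum of two units. -/
theorem stmt12 {R : Type*} [Ring R] [Nontrivial R] (h2 : IsUnit (2 : R))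
    (hR : UnitStableRange1 R) :
    ∀ a : R, ∃ u w : R, IsUnit u ∧ IsUnit w ∧ a = u + w := by
  intro a
  obtain ⟨u, hu, hau⟩ := hR a 1 ⟨0, 1, by simp⟩
  rw [one_mul] at hau
  exact ⟨a + u, -u, hau, hu.neg, by abel⟩
end

section
/- Let R be a ring with stable range 1. If R is unit-central and a, b ∈ R satisfy aR + bR = R, then Ra + Rb = R. -/
/-- Vaserstein's lemma: if `A + (1 - A*B)*C` is a unit, then so is `A + C*(1 - B*A)`,
with explicit two-sided inverse `(1 - B*C) * u⁻¹ * (1 - A*B) + B`. -/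
lemma vaserstein_lemma {R : Type*} [Ring R] (A B C : R)
    (h : IsUnit (A + (1 - A * B) * C)) : IsUnit (A + C * (1 - B * A)) := by
  obtain ⟨U, hU⟩ := h
  have m1 : (A + (1 - A * B) * C) * (↑U⁻¹ : R) = 1 := by rw [← hU]; exact U.mul_inv
  have m2 : (↑U⁻¹ : R) * (A + (1 - A * B) * C) = 1 := by rw [← hU]; exact U.inv_mul
  rw [isUnit_iff_exists]
  refine ⟨(1 - B * C) * (↑U⁻¹ : R) * (1 - A * B) + B, ?_, ?_⟩
  · have h1 : (A + C * (1 - B * A)) * ((1 - B * C) * (↑U⁻¹ : R) * (1 - A * B) + B)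
        = (1 - C * B) * ((A + (1 - A * B) * C) * (↑U⁻¹ : R)) * (1 - A * B)
          + (A + C * (1 - B * A)) * B := by noncomm_ring
    rw [h1, m1]; noncomm_ring
  · have h2 : ((1 - B * C) * (↑U⁻¹ : R) * (1 - A * B) + B) * (A + C * (1 - B * A))
        = (1 - B * C) * ((↑U⁻¹ : R) * (A + (1 - A * B) * C)) * (1 - B * A)
          + B * (A + C * (1 - B * A)) := by noncomm_ring
    rw [h2, m2]; noncomm_ring

theorem stmt13 {R : Type*} [Ring R] [Nontrivial R] (hR : StableRange1 R)
    (hc : ∀ u : R, IsUnit u → ∀ r : R, u * r = r * u)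
    (a b : R) (h : ∃ x y : R, a * x + b * y = 1) :
    ∃ x y : R, x * a + y * b = 1 := by
  obtain ⟨t, hu⟩ := hR a b h
  obtain ⟨U, hU⟩ := hu
  set ui : R := (↑U⁻¹ : R) with hui
  have m2 : ui * (a + b * t) = 1 := by rw [hui, ← hU]; exact U.inv_mul
  obtain ⟨e, hv⟩ := hR t (1 - t * (ui * b)) ⟨ui * b, 1, by noncomm_ring⟩
  have hw : IsUnit (t + e * (1 - ui * b * t)) := vaserstein_lemma t (ui * b) e hv
  have key : (1 : R) - ui * b * t = ui * a := by
    have h3 : ui * a + ui * (b * t) = 1 := by rw [← mul_add, m2]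
    rw [← h3]; noncomm_ring
  rw [key] at hw
  have hcw := hc _ hw
  refine ⟨ui * (1 - b * (e * ui)), (t + e * (ui * a)) * ui, ?_⟩
  have h5 : (t + e * (ui * a)) * ui * b = ui * b * (t + e * (ui * a)) := by
    rw [mul_assoc]; exact hcw (ui * b)
  rw [h5]
  have h6 : ui * (1 - b * (e * ui)) * a + ui * b * (t + e * (ui * a)) = ui * (a + b * t) := by
    noncomm_ring
  rw [h6, m2]
end
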